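/- Let B ∈ ℂ^{m×n}, W ∈ ℂ^{n×m}, let k be a natural number with k = ind(WB), let Z be a minimal rank W-weighted right weak Drazin inverse of B, and let E ∈ ℂ^{m×n} with col(W·E) ⊆ col(W·B·W·Z) and col((W·E)^*) ⊆ col(((W·B)^{k+1})^*). Assume the matrix I + Z·W·E·W ∈ ℂ^{m×m} is invertible (in the paper this is guaranteed by ‖Z·W·E·W‖ < 1), and set 𝔇 = B + E. Then (I + Z·W·E·W)⁻¹·Z is a minimal rank W-weighted right weak Drazin inverse of 𝔇, i.e. W·(𝔇·W)^{k+1}·(I + Z·W·E·W)⁻¹·Z = (W·𝔇)^k and rank((I + Z·W·E·W)⁻¹·Z) = rank((W·𝔇)^k). Moreover (I + Z·W·E·W)⁻¹·Z·W·𝔇·W = Z·W·B·W and W·𝔇·W·(I + Z·W·E·W)⁻¹·Z = W·B·W·Z. -/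

import Mathlib

open Matrix

/-- The index of a square complex matrix: the least `j` with `rank (M^j) = rank (M^(j+1))`. -/
noncomputable def matIndex {p : ℕ} (M : Matrix (Fin p) (Fin p) ℂ) : ℕ :=
  sInf {j : ℕ | (M ^ j).rank = (M ^ (j + 1)).rank}

/-- The column space of a complex matrix: the range of `v ↦ M *ᵥ v`. -/
noncomputable def colSpace {a b : ℕ} (M : Matrix (Fin a) (Fin b) ℂ) :
    Submodule ℂ (Fin a → ℂ) :=
  LinearMap.range M.mulVecLin

/-- The null space of a complex matrix: the kernel of `v ↦ M *ᵥ v`. -/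
noncomputable def nullSpace {a b : ℕ} (M : Matrix (Fin a) (Fin b) ℂ) :
    Submodule ℂ (Fin b → ℂ) :=
  LinearMap.ker M.mulVecLin


lemma rank_eq_finrank_colSpace {a b : ℕ} (M : Matrix (Fin a) (Fin b) ℂ) :
    M.rank = Module.finrank ℂ (colSpace M) := rfl

lemma colSpace_mul_le {a b c : ℕ} (N : Matrix (Fin a) (Fin c) ℂ) (C : Matrix (Fin c) (Fin b) ℂ) :
    colSpace (N * C) ≤ colSpace N := by
  rw [colSpace, colSpace, Matrix.mulVecLin_mul]
  exact LinearMap.range_comp_le_range _ _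

lemma exists_factor {a b c : ℕ} {M : Matrix (Fin a) (Fin b) ℂ} {N : Matrix (Fin a) (Fin c) ℂ}
    (h : colSpace M ≤ colSpace N) : ∃ C : Matrix (Fin c) (Fin b) ℂ, M = N * C := by
  have hcol : ∀ j : Fin b, ∃ v : Fin c → ℂ, N *ᵥ v = fun i => M i j := by
    intro j
    have : (fun i => M i j) ∈ colSpace N := by
      apply h
      exact ⟨Pi.single j 1, by simp [Matrix.mulVecLin]; rfl⟩
    exact this
  choose v hv using hcol
  refine ⟨Matrix.of (fun i j => v j i), ?_⟩
  ext i j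
  have := congrFun (hv j) i
  simp only [Matrix.mulVec, dotProduct] at this
  simp [Matrix.mul_apply, ← this]

lemma isUnit_one_add_swap {p q : ℕ} (a : Matrix (Fin p) (Fin q) ℂ) (b : Matrix (Fin q) (Fin p) ℂ)
    (h : IsUnit (1 + a * b)) : IsUnit (1 + b * a) := by
  set u : Matrix (Fin p) (Fin p) ℂ := 1 + a * b with hu
  have hdet : IsUnit u.det := (Matrix.isUnit_iff_isUnit_det u).mp h
  have h1 : u * u⁻¹ = 1 := Matrix.mul_nonsing_inv u hdet
  set x : Matrix (Fin p) (Fin q) ℂ := u⁻¹ * a with hx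
  have e2 : b * a * (b * x) = b * ((a * b) * x) := by
    rw [Matrix.mul_assoc b a (b * x), ← Matrix.mul_assoc a b x]
  have e3 : b * x + b * ((a * b) * x) = b * a := by
    have hxa : x + (a * b) * x = a := by
      calc x + (a * b) * x = (1 + a * b) * x := by rw [Matrix.add_mul, Matrix.one_mul]
        _ = u * (u⁻¹ * a) := by rw [← hu, hx]
        _ = a := by rw [← Matrix.mul_assoc, h1, Matrix.one_mul]
    rw [← Matrix.mul_add, hxa]
  have key : (1 + b * a) * (1 - b * x) = 1 := by
    calc (1 + b * a) * (1 - b * x)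
        = (1 - b * x) + (b * a - b * a * (b * x)) := by
          rw [Matrix.add_mul, Matrix.one_mul, Matrix.mul_sub, Matrix.mul_one]
      _ = (1 - b * x) + (b * a - b * ((a * b) * x)) := by rw [e2]
      _ = 1 + b * a - (b * x + b * ((a * b) * x)) := by abel
      _ = 1 + b * a - b * a := by rw [e3]
      _ = 1 := by abel
  rw [Matrix.isUnit_iff_isUnit_det]
  have : (1 + b * a).det * (1 - b * x).det = 1 := by
    rw [← Matrix.det_mul, key, Matrix.det_one]
  exact IsUnit.of_mul_eq_one _ this

open scoped ComplexOrder in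
lemma rank_conjT {a b : ℕ} (M : Matrix (Fin a) (Fin b) ℂ) : Mᴴ.rank = M.rank :=
  Matrix.rank_conjTranspose M

lemma rank_unit_mul {p q : ℕ} {M : Matrix (Fin p) (Fin p) ℂ} (hM : IsUnit M)
    (N : Matrix (Fin p) (Fin q) ℂ) : (M * N).rank = N.rank := by
  have hdet := (Matrix.isUnit_iff_isUnit_det M).mp hM
  apply le_antisymm (Matrix.rank_mul_le_right M N)
  have : N = M⁻¹ * (M * N) := by rw [← Matrix.mul_assoc, Matrix.nonsing_inv_mul M hdet, Matrix.one_mul]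
  calc N.rank = (M⁻¹ * (M * N)).rank := by rw [← this]
    _ ≤ (M * N).rank := Matrix.rank_mul_le_right _ _

section Aux
variable {n : ℕ} {k : ℕ} {A a F Y C₀ C₁ : Matrix (Fin n) (Fin n) ℂ}

lemma aux_aAa (h1 : A ^ (k+1) * a = A ^ k) (h2 : a = C₀ * A ^ k) :
    a * (A * a) = a := by
  nth_rewrite 1 [h2]
  calc C₀ * A ^ k * (A * a) = C₀ * (A ^ (k+1) * a) := by
        rw [mul_assoc, ← mul_assoc (A ^ k) A a, ← pow_succ]
    _ = C₀ * A ^ k := by rw [h1]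
    _ = a := h2.symm

lemma aux_Pidem (h1 : A ^ (k+1) * a = A ^ k) (h2 : a = C₀ * A ^ k) :
    (A * a) * (A * a) = A * a := by
  rw [mul_assoc A a (A * a), aux_aAa h1 h2]

lemma aux_Fa (h1 : A ^ (k+1) * a = A ^ k) (h3 : F = Y * A ^ (k+1)) :
    F * a = Y * A ^ k := by
  rw [h3, mul_assoc, h1]

lemma aux_FaA (h1 : A ^ (k+1) * a = A ^ k) (h3 : F = Y * A ^ (k+1)) :
    F * a * A = F := by
  rw [aux_Fa h1 h3, mul_assoc, ← pow_succ, ← h3]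

lemma aux_PF (h1 : A ^ (k+1) * a = A ^ k) (h2 : a = C₀ * A ^ k)
    (h4 : F = A * a * C₁) : (A * a) * F = F := by
  rw [h4, ← mul_assoc, aux_Pidem h1 h2]

lemma aux_AiP (h1 : A ^ (k+1) * a = A ^ k) (i : ℕ) :
    A ^ (k+i) * (A * a) = A ^ (k+i) := by
  have e : A ^ (k+i) * A = A ^ i * A ^ (k+1) := by
    rw [← pow_succ, ← pow_add]
    congr 1
    omega
  rw [← mul_assoc, e, mul_assoc, h1, ← pow_add, Nat.add_comm]

lemma aux_FAjP (h1 : A ^ (k+1) * a = A ^ k) (h3 : F = Y * A ^ (k+1)) (j : ℕ) :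
    F * A ^ j * (A * a) = F * A ^ j := by
  have e : F * A ^ j = Y * A ^ (k+(1+j)) := by
    rw [h3, mul_assoc, ← pow_add]
    congr 2
    omega
  rw [e, mul_assoc, aux_AiP h1 (1+j)]

lemma aux_inv1 (h1 : A ^ (k+1) * a = A ^ k) (h3 : F = Y * A ^ (k+1)) (j : ℕ) :
    (A + F) ^ j - (A + F) ^ j * (A * a) = A ^ j - A ^ j * (A * a) := by
  induction j with
  | zero => simp
  | succ j ih =>
    have hF0 : F * (A ^ j - A ^ j * (A * a)) = 0 := by
      rw [mul_sub, ← mul_assoc, aux_FAjP h1 h3 j, sub_self]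
    calc (A + F) ^ (j+1) - (A + F) ^ (j+1) * (A * a)
        = (A + F) * ((A + F) ^ j - (A + F) ^ j * (A * a)) := by
          rw [pow_succ', mul_sub, mul_assoc]
      _ = (A + F) * (A ^ j - A ^ j * (A * a)) := by rw [ih]
      _ = A * (A ^ j - A ^ j * (A * a)) + F * (A ^ j - A ^ j * (A * a)) := add_mul _ _ _
      _ = A * (A ^ j - A ^ j * (A * a)) := by rw [hF0, add_zero]
      _ = A ^ (j+1) - A ^ (j+1) * (A * a) := by
          rw [mul_sub, ← mul_assoc, ← pow_succ']

lemma aux_A'kP (h1 : A ^ (k+1) * a = A ^ k) (h3 : F = Y * A ^ (k+1)) :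
    (A + F) ^ k * (A * a) = (A + F) ^ k := by
  have h0 := aux_inv1 h1 h3 k
  have hk : A ^ k * (A * a) = A ^ k := by simpa using aux_AiP h1 0
  rw [hk, sub_self] at h0
  exact (sub_eq_zero.mp h0).symm

lemma aux_A'a (h1 : A ^ (k+1) * a = A ^ k) (h2 : a = C₀ * A ^ k)
    (h4 : F = A * a * C₁) :
    (A + F) * a = A * a * (1 + F * a) := by
  rw [add_mul, mul_add, mul_one]
  have h5 : A * a * (F * a) = F * a := by
    rw [← mul_assoc, aux_PF h1 h2 h4]
  rw [h5]
lemma aux_units {n : ℕ} {k : ℕ} {A F Y : Matrix (Fin n) (Fin n) ℂ}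
    (h3 : F = Y * A ^ (k+1)) (hV : IsUnit (1 + Y * A ^ k)) :
    ∀ j, j ≤ k → ∃ M, IsUnit M ∧ (A + F) ^ j = M * A ^ j := by
  intro j
  induction j with
  | zero => exact fun _ => ⟨1, isUnit_one, by simp⟩
  | succ j ih =>
    intro hjk
    have hjk' : j ≤ k := Nat.le_of_succ_le hjk
    obtain ⟨M, hM, hMe⟩ := ih hjk'
    have hswap : IsUnit (1 + A ^ j * (Y * A ^ (k-j))) := by
      apply isUnit_one_add_swap (Y * A ^ (k-j)) (A ^ j)
      have e : Y * A ^ (k-j) * A ^ j = Y * A ^ k := by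
        rw [mul_assoc, ← pow_add]
        congr 2
        omega
      rw [e]
      exact hV
    refine ⟨M * (1 + A ^ j * (Y * A ^ (k-j))), hM.mul hswap, ?_⟩
    have key : A ^ j * (A + F) = (1 + A ^ j * (Y * A ^ (k-j))) * A ^ (j+1) := by
      rw [mul_add, h3, add_mul, one_mul, ← pow_succ]
      congr 1
      have e2 : k - j + (j + 1) = k + 1 := by omega
      rw [mul_assoc, mul_assoc, ← pow_add, e2]
    rw [pow_succ, hMe, mul_assoc, key, ← mul_assoc]

/-- **Theorem 3.18.** Perturbation of the minimal rank W-weighted right weak Drazin inverse. -/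
theorem weighted_right_weak_Drazin_perturbation {m n : ℕ}
    (B : Matrix (Fin m) (Fin n) ℂ) (W : Matrix (Fin n) (Fin m) ℂ)
    (k : ℕ) (hk : k = matIndex (W * B))
    (Z : Matrix (Fin m) (Fin n) ℂ)
    (hZ1 : W * (B * W) ^ (k + 1) * Z = (W * B) ^ k)
    (hZ2 : Z.rank = ((W * B) ^ k).rank)
    (E : Matrix (Fin m) (Fin n) ℂ)
    (hE1 : colSpace (W * E) ≤ colSpace (W * B * W * Z))
    (hE2 : colSpace (W * E)ᴴ ≤ colSpace ((W * B) ^ (k + 1))ᴴ)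
    (hu : IsUnit (1 + Z * W * E * W))
    (𝔇 : Matrix (Fin m) (Fin n) ℂ) (h𝔇 : 𝔇 = B + E) :
    W * (𝔇 * W) ^ (k + 1) * ((1 + Z * W * E * W)⁻¹ * Z) = (W * 𝔇) ^ k ∧
    ((1 + Z * W * E * W)⁻¹ * Z).rank = ((W * 𝔇) ^ k).rank ∧
    (1 + Z * W * E * W)⁻¹ * Z * W * 𝔇 * W = Z * W * B * W ∧
    W * 𝔇 * W * ((1 + Z * W * E * W)⁻¹ * Z) = W * B * W * Z := by
  subst h𝔇
  -- shift lemma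
  have hshift : ∀ (M : Matrix (Fin m) (Fin n) ℂ) (j : ℕ),
      W * (M * W) ^ j = (W * M) ^ j * W := by
    intro M j
    induction j with
    | zero => rw [pow_zero, pow_zero, Matrix.mul_one, Matrix.one_mul]
    | succ j ih =>
      rw [pow_succ, pow_succ, ← Matrix.mul_assoc, ih, Matrix.mul_assoc,
        ← Matrix.mul_assoc W M W, ← Matrix.mul_assoc ((W * M) ^ j) (W * M) W]
  have f1 : (W * B) ^ (k+1) * W * Z = (W * B) ^ k := by
    have h := hZ1
    rwa [hshift B (k+1)] at h
  have k1₀ : (W * B) ^ (k+1) * (W * Z) = (W * B) ^ k := by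
    rw [← Matrix.mul_assoc]
    exact f1
  -- factorization of Z through (W*B)^k
  have f1H : ((W * B) ^ k)ᴴ = Zᴴ * ((W * B) ^ (k+1) * W)ᴴ := by
    rw [← f1]
    exact Matrix.conjTranspose_mul _ _
  have le1 : colSpace ((W * B) ^ k)ᴴ ≤ colSpace Zᴴ := by
    rw [f1H]
    exact colSpace_mul_le _ _
  have hrk : (Zᴴ).rank = (((W * B) ^ k)ᴴ).rank := by
    rw [rank_conjT, rank_conjT]
    exact hZ2
  have hcolEq : colSpace ((W * B) ^ k)ᴴ = colSpace Zᴴ := by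
    apply Submodule.eq_of_le_of_finrank_le le1
    rw [← rank_eq_finrank_colSpace, ← rank_eq_finrank_colSpace]
    exact le_of_eq hrk
  obtain ⟨C₀, hC₀⟩ := exists_factor (le_of_eq hcolEq.symm)
  have fZ : Z = C₀ᴴ * (W * B) ^ k := by
    have h := congrArg Matrix.conjTranspose hC₀
    simpa [Matrix.conjTranspose_mul] using h
  have k2 : W * Z = (W * C₀ᴴ) * (W * B) ^ k := by
    rw [fZ, ← Matrix.mul_assoc]
  -- factorization of W*E
  obtain ⟨C₂, hC₂⟩ := exists_factor hE2
  have k3 : W * E = C₂ᴴ * (W * B) ^ (k+1) := by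
    have h := congrArg Matrix.conjTranspose hC₂
    simpa [Matrix.conjTranspose_mul] using h
  obtain ⟨C₁, hC₁⟩ := exists_factor hE1
  have k4 : W * E = (W * B) * (W * Z) * C₁ := by
    rw [hC₁, Matrix.mul_assoc (W * B) W Z]
  -- units
  have hUd : IsUnit (1 + Z * W * E * W).det := (Matrix.isUnit_iff_isUnit_det _).mp hu
  have hUr : (1 + Z * W * E * W) * (1 + Z * W * E * W)⁻¹ = 1 := Matrix.mul_nonsing_inv _ hUd
  have hUl : (1 + Z * W * E * W)⁻¹ * (1 + Z * W * E * W) = 1 := Matrix.nonsing_inv_mul _ hUd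
  have hVu : IsUnit ((1 : Matrix (Fin n) (Fin n) ℂ) + (W * E) * (W * Z)) := by
    have h' : IsUnit ((1 : Matrix (Fin m) (Fin m) ℂ) + Z * ((W * E) * W)) := by
      have e : Z * ((W * E) * W) = Z * W * E * W := by
        rw [← Matrix.mul_assoc, ← Matrix.mul_assoc]
      rw [e]
      exact hu
    have h2 := isUnit_one_add_swap Z ((W * E) * W) h'
    have e2 : (W * E) * W * Z = (W * E) * (W * Z) := Matrix.mul_assoc _ _ _
    rwa [e2] at h2
  have hVd := (Matrix.isUnit_iff_isUnit_det _).mp hVu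
  have hVr : (1 + (W * E) * (W * Z)) * (1 + (W * E) * (W * Z))⁻¹ = 1 :=
    Matrix.mul_nonsing_inv _ hVd
  have hZV : Z * (1 + (W * E) * (W * Z)) = (1 + Z * W * E * W) * Z := by
    rw [Matrix.mul_add, Matrix.mul_one, Matrix.add_mul, Matrix.one_mul]
    simp only [Matrix.mul_assoc]
  have hZ' : (1 + Z * W * E * W)⁻¹ * Z = Z * (1 + (W * E) * (W * Z))⁻¹ := by
    calc (1 + Z * W * E * W)⁻¹ * Z
        = (1 + Z * W * E * W)⁻¹ * Z *
            ((1 + (W * E) * (W * Z)) * (1 + (W * E) * (W * Z))⁻¹) := by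
          rw [hVr, Matrix.mul_one]
      _ = (1 + Z * W * E * W)⁻¹ * (Z * (1 + (W * E) * (W * Z))) *
            (1 + (W * E) * (W * Z))⁻¹ := by
          rw [← Matrix.mul_assoc, Matrix.mul_assoc ((1 + Z * W * E * W)⁻¹) Z]
      _ = (1 + Z * W * E * W)⁻¹ * ((1 + Z * W * E * W) * Z) *
            (1 + (W * E) * (W * Z))⁻¹ := by rw [hZV]
      _ = Z * (1 + (W * E) * (W * Z))⁻¹ := by
          rw [← Matrix.mul_assoc, hUl, Matrix.one_mul]
  refine ⟨?_, ?_, ?_, ?_⟩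
  · -- goal (a)
    rw [hshift (B + E) (k+1), Matrix.mul_add W B E, hZ', ← Matrix.mul_assoc,
      Matrix.mul_assoc ((W * B + W * E) ^ (k+1)) W Z]
    have key : (W * B + W * E) ^ (k+1) * (W * Z)
        = (W * B + W * E) ^ k * (1 + (W * E) * (W * Z)) := by
      rw [pow_succ, Matrix.mul_assoc, aux_A'a k1₀ k2 k4, ← Matrix.mul_assoc,
        aux_A'kP k1₀ k3]
    rw [key, Matrix.mul_assoc, hVr, Matrix.mul_one]
  · -- goal (b)
    rw [Matrix.mul_add W B E]
    have hUinv : IsUnit (1 + Z * W * E * W)⁻¹ := by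
      rw [Matrix.isUnit_iff_isUnit_det]
      refine IsUnit.of_mul_eq_one (1 + Z * W * E * W).det ?_
      rw [← Matrix.det_mul, hUl, Matrix.det_one]
    have r1 : ((1 + Z * W * E * W)⁻¹ * Z).rank = Z.rank := rank_unit_mul hUinv Z
    have hVu' : IsUnit (1 + C₂ᴴ * (W * B) ^ k) := by
      rw [← aux_Fa k1₀ k3]
      exact hVu
    obtain ⟨M, hM, hMe⟩ := aux_units k3 hVu' k le_rfl
    rw [r1, hZ2, hMe, rank_unit_mul hM]
  · -- goal (c)
    have assoc1 : (1 + Z * W * E * W)⁻¹ * Z * W * (B + E) * W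
        = (1 + Z * W * E * W)⁻¹ * (Z * W * (B + E) * W) := by
      simp only [Matrix.mul_assoc]
    have key3 : Z * W * (B + E) * W = (1 + Z * W * E * W) * (Z * W * B * W) := by
      rw [Matrix.mul_add (Z * W) B E, Matrix.add_mul, Matrix.add_mul, Matrix.one_mul]
      congr 1
      have e : (Z * W * E * W) * (Z * W * B * W) = Z * ((W * E) * (W * Z) * (W * B) * W) := by
        simp only [Matrix.mul_assoc]
      rw [e, aux_FaA k1₀ k3, ← Matrix.mul_assoc, ← Matrix.mul_assoc]
    rw [assoc1, key3, ← Matrix.mul_assoc, hUl, Matrix.one_mul]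
  · -- goal (d)
    rw [hZ', ← Matrix.mul_assoc, Matrix.mul_assoc (W * (B + E)) W Z,
      Matrix.mul_add W B E, aux_A'a k1₀ k2 k4, Matrix.mul_assoc, hVr,
      Matrix.mul_one, ← Matrix.mul_assoc]
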